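/- arXiv:1101.1113 — 2 statements merged into one kernel-verified Lean document; each statement's English description precedes it below -/
import Mathlib

section
/- Let W be a finite Coxeter group acting as a reflection group on a Euclidean space E spanned by its root system. Then any Coxeter element w (a product of all simple reflections, each occurring once) does not have 1 as an eigenvalue. -/
open scoped RealInnerProductSpace

/-! A vector fixed by `w = s₁ ⋯ sₙ` is fixed by every `sᵢ`: peeling off `s₁`, the vector
`u = s₂ ⋯ sₙ v` satisfies `s₁ u - u ∈ ℝ α₁` while `u - v ∈ span {α₂, …, αₙ}`, and `s₁ u = v`
makes these two differences opposite, so both vanish by linear independence. A vector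
fixed by every `sᵢ` is orthogonal to every `αᵢ`, hence zero since the `αᵢ` span `E`. -/

open Submodule

section ProductOfPerturbations

variable {R M ι : Type*} [Ring R] [AddCommGroup M] [Module R M]
  {α : ι → M} {t : ι → M →ₗ[R] M}

theorem prod_map_apply_sub_mem_span (ht : ∀ i v, t i v - v ∈ R ∙ α i) (l : List ι) (v : M) :
    (l.map t).prod v - v ∈ span R (α '' {i | i ∈ l}) := by
  induction l with
  | nil => simp
  | cons i l ih =>
    have hi : R ∙ α i ≤ span R (α '' {j | j ∈ i :: l}) :=
      span_mono (Set.singleton_subset_iff.mpr ⟨i, List.mem_cons_self, rfl⟩)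
    have hl : span R (α '' {j | j ∈ l}) ≤ span R (α '' {j | j ∈ i :: l}) :=
      span_mono (Set.image_mono fun j hj => List.mem_cons_of_mem i hj)
    have hsplit : ((i :: l).map t).prod v - v
        = (t i ((l.map t).prod v) - (l.map t).prod v) + ((l.map t).prod v - v) := by
      simp
    rw [hsplit]
    exact add_mem (hi (ht i _)) (hl ih)

theorem LinearIndependent.apply_eq_self_of_prod_map_apply_eq_self (hα : LinearIndependent R α)
    (ht : ∀ i v, t i v - v ∈ R ∙ α i) {l : List ι} (hl : l.Nodup) {v : M}
    (hv : (l.map t).prod v = v) : ∀ i ∈ l, t i v = v := by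
  induction l with
  | nil => simp
  | cons i l ih =>
    obtain ⟨hil, hl⟩ := List.nodup_cons.mp hl
    set u := (l.map t).prod v
    have hiu : t i u = v := by simpa using hv
    have hdisj : Disjoint (R ∙ α i) (span R (α '' {j | j ∈ l})) := by
      simpa using hα.disjoint_span_image (Set.disjoint_singleton_left.mpr hil)
    have hmem : t i u - u ∈ span R (α '' {j | j ∈ l}) := by
      rw [hiu, ← neg_sub]
      exact neg_mem (prod_map_apply_sub_mem_span ht l v)
    have huv : u = v := by
      rw [← hiu]
      exact (sub_eq_zero.mp (disjoint_def.mp hdisj _ (ht i u) hmem)).symm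
    intro j hj
    rcases List.mem_cons.mp hj with rfl | hj
    · rw [← huv, hiu, huv]
    · exact ih hl huv j hj

end ProductOfPerturbations

section Reflection

variable {E : Type*} [NormedAddCommGroup E] [InnerProductSpace ℝ E] {r : E → E} {a : E}

theorem reflection_apply_sub_mem_span (hr : ∀ v, r v = v - (2 * ⟪v, a⟫ / ⟪a, a⟫) • a)
    (v : E) : r v - v ∈ ℝ ∙ a := by
  rw [hr, sub_sub_cancel_left]
  exact neg_mem (smul_mem _ _ (mem_span_singleton_self a))

theorem inner_eq_zero_of_reflection_apply_eq_self
    (hr : ∀ v, r v = v - (2 * ⟪v, a⟫ / ⟪a, a⟫) • a) (ha : a ≠ 0) {v : E} (hv : r v = v) :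
    ⟪v, a⟫ = 0 := by
  rw [hr, sub_eq_self, smul_eq_zero] at hv
  simpa [ha] using hv

end Reflection

theorem stmt12_general (E : Type*) [NormedAddCommGroup E] [InnerProductSpace ℝ E]
    (n : ℕ) (α : Fin n → E)
    (hindep : LinearIndependent ℝ α)
    (hspan : Submodule.span ℝ (Set.range α) = ⊤)
    (s : Fin n → E →ₗ[ℝ] E)
    (hs : ∀ i v, s i v = v - (2 * ⟪v, α i⟫ / ⟪α i, α i⟫) • α i)
    (w : E →ₗ[ℝ] E) (hw : w = (List.ofFn s).prod) :
    ¬ Module.End.HasEigenvalue w 1 := by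
  intro h
  obtain ⟨v, hv⟩ := h.exists_hasEigenvector
  have hwv : ((List.finRange n).map s).prod v = v := by
    simpa [hw, List.ofFn_eq_map] using hv.apply_eq_smul
  have hfix : ∀ i, s i v = v := fun i =>
    hindep.apply_eq_self_of_prod_map_apply_eq_self
      (fun i => reflection_apply_sub_mem_span (hs i))
      (List.nodup_finRange n) hwv i (List.mem_finRange i)
  have horth : innerₛₗ ℝ v = 0 := LinearMap.ext_on_range hspan fun i =>
    inner_eq_zero_of_reflection_apply_eq_self (hs i) (hindep.ne_zero i) (hfix i)
  exact hv.2 (inner_self_eq_zero.mp (LinearMap.congr_fun horth v))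

/-- Let `W` be a finite Coxeter group acting as a reflection group on a Euclidean space `E`
spanned by its root system `Φ`, with simple system `α₁, …, α_n` (a basis of `E`) and
simple reflections `s i`.  Then the Coxeter element `w = s₁ ⋯ s_n` does not have `1`
as an eigenvalue. -/
theorem stmt12 (E : Type*) [NormedAddCommGroup E] [InnerProductSpace ℝ E]
    [FiniteDimensional ℝ E]
    (Φ : Finset E) (hΦ0 : (0 : E) ∉ Φ)
    (hΦspan : Submodule.span ℝ (Φ : Set E) = ⊤)
    (n : ℕ) (α : Fin n → E) (hαΦ : ∀ i, α i ∈ Φ)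
    (hindep : LinearIndependent ℝ α)
    (hspan : Submodule.span ℝ (Set.range α) = ⊤)
    (s : Fin n → E →ₗ[ℝ] E)
    (hs : ∀ i v, s i v = v - (2 * ⟪v, α i⟫ / ⟪α i, α i⟫) • α i)
    (w : E →ₗ[ℝ] E) (hw : w = (List.ofFn s).prod) :
    ¬ Module.End.HasEigenvalue w 1 :=
  stmt12_general E n α hindep hspan s hs w hw
end

section
/- Let p be a prime and q an integer coprime to p with q > 2. The congruence subgroup Γ_q = ker(SL_d(ℤ[1/p]) → SL_d(ℤ[1/p]/qℤ[1/p])) is dense in SL_d(ℚ_p). -/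
/-!
Transvections generate `SL_d` over a field, so a submonoid of matrices containing every
transvection contains `SL_d(ℚ_p)`. The closure of `Γ_q` is such a submonoid:
`transvection i j (q x)` lies in `Γ_q` for `x ∈ ℤ[1/p]`, the map `t ↦ transvection i j t` is
continuous, and `q ℤ[1/p]` is dense in `ℚ_p` because `ℤ[1/p]` is: it contains `ℤ`, which is dense
in `ℤ_p`, and every `x ∈ ℚ_p` is `p⁻ⁿ` times an element of `ℤ_p`.
-/

namespace Matrix

variable {n K : Type*} [DecidableEq n]

theorem continuous_transvection [CommRing K] [TopologicalSpace K] [IsTopologicalRing K]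
    (i j : n) : Continuous (transvection i j : K → Matrix n n K) := by
  have : (transvection i j : K → Matrix n n K) = fun c => 1 + c • single i j 1 := by
    funext c
    rw [transvection, smul_single, smul_eq_mul, mul_one]
  rw [this]
  exact continuous_const.add (continuous_id.smul continuous_const)

theorem transvection_apply [CommRing K] (i j k l : n) (c : K) :
    transvection i j c k l = (1 : Matrix n n K) k l + if i = k ∧ j = l then c else 0 := by
  simp [transvection, single_apply]

variable [Fintype n]

theorem SpecialLinearGroup.coe_diag2n_eq_transvection_prod [Field K] {i j : n} (hij : i ≠ j)
    (c : K) (hc : c ≠ 0) :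
    (SpecialLinearGroup.diag2n hij c hc : Matrix n n K) =
      Matrix.transvection i j c * Matrix.transvection j i (-c⁻¹) * Matrix.transvection i j c *
        Matrix.transvection i j (-1) * Matrix.transvection j i 1 *
          Matrix.transvection i j (-1) := by
  rw [diag2n_coe]
  ext k l
  rcases eq_or_ne k i with hki | hki <;> rcases eq_or_ne k j with hkj | hkj <;>
    rcases eq_or_ne l i with hli | hli <;> rcases eq_or_ne l j with hlj | hlj <;>
    simp_all [transvection_apply, diagonal_apply, one_apply, hij.symm] <;> simp_all [eq_comm]

theorem _root_.Submonoid.mem_of_det_eq_one_of_forall_transvection_mem [Field K] [Nontrivial n]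
    (G : Submonoid (Matrix n n K)) (hG : ∀ i j, i ≠ j → ∀ c : K, transvection i j c ∈ G)
    {A : Matrix n n K} (hA : A.det = 1) : A ∈ G := by
  refine SpecialLinearGroup.diagonal_transvection_induction' (fun M => (M : Matrix n n K) ∈ G)
    ⟨A, hA⟩ (fun i j hij c hc => ?_) hG fun _ _ => mul_mem
  rw [SpecialLinearGroup.coe_diag2n_eq_transvection_prod]
  have hji := hij.symm
  exact mul_mem (mul_mem (mul_mem (mul_mem (mul_mem (hG i j hij _) (hG j i hji _))
    (hG i j hij _)) (hG i j hij _)) (hG j i hji _)) (hG i j hij _)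

def congruenceSubmonoid [CommRing K] (R : Subring K) (q : K) : Submonoid (Matrix n n K) where
  carrier := {B | B.det = 1 ∧ ∀ i j, B i j ∈ R ∧ ∃ c ∈ R, B i j - (1 : Matrix n n K) i j = q * c}
  one_mem' := ⟨det_one, fun i j => ⟨by rw [one_apply]; split_ifs <;> simp,
    0, zero_mem R, by simp⟩⟩
  mul_mem' := by
    rintro B B' ⟨hB, hBR⟩ ⟨hB', hB'R⟩
    refine ⟨by rw [det_mul, hB, hB', one_mul], fun i j => ⟨?_, ?_⟩⟩
    · rw [mul_apply]
      exact sum_mem fun k _ => mul_mem (hBR i k).1 (hB'R k j).1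
    · choose c hcR hc using fun i j => (hBR i j).2
      obtain ⟨c', hc'R, hc'⟩ := (hB'R i j).2
      refine ⟨∑ k, c i k * B' k j + c',
        add_mem (sum_mem fun k _ => mul_mem (hcR i k) (hB'R k j).1) hc'R, ?_⟩
      have hsplit := congrFun₂ (show B * B' - 1 = (B - 1) * B' + (B' - 1) by noncomm_ring) i j
      simp only [sub_apply, add_apply] at hsplit
      rw [hsplit, hc', mul_apply, mul_add, Finset.mul_sum]
      simp only [sub_apply, hc, mul_assoc]

theorem transvection_mem_congruenceSubmonoid [CommRing K] {R : Subring K} {q : K} (hq : q ∈ R)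
    (i j : n) (hij : i ≠ j) {x : K} (hx : x ∈ R) :
    transvection i j (q * x) ∈ congruenceSubmonoid R q := by
  refine ⟨det_transvection_of_ne i j hij _, fun k l => ⟨?_, if i = k ∧ j = l then x else 0, ?_, ?_⟩⟩
  · rw [transvection_apply, one_apply]
    exact add_mem (by split_ifs <;> simp) (by split_ifs <;> simp [mul_mem hq hx])
  · split_ifs
    exacts [hx, zero_mem R]
  · rw [transvection_apply, add_sub_cancel_left, mul_ite, mul_zero]

theorem transvection_mem_closure_congruenceSubmonoid [CommRing K] [TopologicalSpace K]
    [IsTopologicalRing K] {R : Subring K} {q : K} (hq : q ∈ R) (hdense : Dense ((q * ·) '' R))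
    (i j : n) (hij : i ≠ j) (c : K) :
    transvection i j c ∈ (congruenceSubmonoid R q).topologicalClosure := by
  refine map_mem_closure (continuous_transvection i j) (hdense c) ?_
  rintro _ ⟨x, hx, rfl⟩
  exact transvection_mem_congruenceSubmonoid hq i j hij hx

theorem mem_closure_congruenceSubmonoid_of_det_eq_one [Field K] [TopologicalSpace K]
    [IsTopologicalRing K] [Nontrivial n] {R : Subring K} {q : K} (hq : q ∈ R)
    (hdense : Dense ((q * ·) '' R)) {A : Matrix n n K} (hA : A.det = 1) :
    A ∈ closure ((congruenceSubmonoid R q : Submonoid (Matrix n n K)) : Set (Matrix n n K)) :=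
  Submonoid.mem_of_det_eq_one_of_forall_transvection_mem _
    (transvection_mem_closure_congruenceSubmonoid hq hdense) hA

end Matrix

theorem Padic.exists_pow_mul_norm_le_one (p : ℕ) [Fact p.Prime] (x : ℚ_[p]) :
    ∃ n : ℕ, ‖(p : ℚ_[p]) ^ n * x‖ ≤ 1 := by
  rcases eq_or_ne x 0 with rfl | hx
  · exact ⟨0, by simp⟩
  refine ⟨(-x.valuation).toNat, ?_⟩
  have hp : (p : ℚ_[p]) ≠ 0 := Nat.cast_ne_zero.2 (Fact.out : p.Prime).ne_zero
  rw [norm_le_one_iff_val_nonneg, valuation_mul (pow_ne_zero _ hp) hx, valuation_pow, valuation_p]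
  omega

theorem Padic.dense_subringClosure_inv_p (p : ℕ) [Fact p.Prime] :
    Dense (Subring.closure {(p : ℚ_[p])⁻¹} : Set ℚ_[p]) := by
  set S := (Subring.closure {(p : ℚ_[p])⁻¹}).topologicalClosure
  have hZp (y : ℤ_[p]) : (y : ℚ_[p]) ∈ S :=
    map_mem_closure continuous_subtype_val (PadicInt.denseRange_intCast y) <| by
      rintro _ ⟨m, rfl⟩
      simp
  have hpinv : (p : ℚ_[p])⁻¹ ∈ S :=
    Subring.le_topologicalClosure _ (Subring.subset_closure rfl)
  intro x
  obtain ⟨n, hn⟩ := exists_pow_mul_norm_le_one p x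
  have hp : (p : ℚ_[p]) ≠ 0 := Nat.cast_ne_zero.2 (Fact.out : p.Prime).ne_zero
  have hx : x = (p : ℚ_[p])⁻¹ ^ n * ((p : ℚ_[p]) ^ n * x) := by
    rw [← mul_assoc, ← mul_pow, inv_mul_cancel₀ hp, one_pow, one_mul]
  rw [hx]
  exact mul_mem (pow_mem hpinv n) (hZp ⟨_, hn⟩)

theorem stmt16_general (p : ℕ) [Fact p.Prime] (d : ℕ) (hd : 2 ≤ d)
    (q : ℤ) (hq : 2 < q) :
    ∀ A : Matrix (Fin d) (Fin d) ℚ_[p], A.det = 1 →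
      A ∈ closure {B : Matrix (Fin d) (Fin d) ℚ_[p] |
        B.det = 1 ∧ ∀ i j, B i j ∈ Subring.closure {((p : ℚ_[p]))⁻¹} ∧
          ∃ c ∈ Subring.closure {((p : ℚ_[p]))⁻¹},
            B i j - (1 : Matrix (Fin d) (Fin d) ℚ_[p]) i j = (q : ℚ_[p]) * c} := by
  intro A hA
  have : Nontrivial (Fin d) := Fin.nontrivial_iff_two_le.2 hd
  have hq0 : (q : ℚ_[p]) ≠ 0 := Int.cast_ne_zero.2 (by omega)
  exact Matrix.mem_closure_congruenceSubmonoid_of_det_eq_one (intCast_mem _ q)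
    ((Homeomorph.mulLeft₀ _ hq0).isDenseEmbedding.dense_image.2
      (Padic.dense_subringClosure_inv_p p)) hA

/-- For a prime `p` and an integer `q > 2` coprime to `p`, the congruence subgroup
`Γ_q = ker(SL_d(ℤ[1/p]) → SL_d(ℤ[1/p]/qℤ[1/p]))`, realized as the set of determinant-one
matrices over `ℚ_p` with entries in `ℤ[1/p]` congruent to the identity mod `q`, is dense
in `SL_d(ℚ_p)`. -/
theorem stmt16 (p : ℕ) [Fact p.Prime] (d : ℕ) (hd : 2 ≤ d)
    (q : ℤ) (hq : 2 < q) (hqp : IsCoprime q (p : ℤ)) :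
    ∀ A : Matrix (Fin d) (Fin d) ℚ_[p], A.det = 1 →
      A ∈ closure {B : Matrix (Fin d) (Fin d) ℚ_[p] |
        B.det = 1 ∧ ∀ i j, B i j ∈ Subring.closure {((p : ℚ_[p]))⁻¹} ∧
          ∃ c ∈ Subring.closure {((p : ℚ_[p]))⁻¹},
            B i j - (1 : Matrix (Fin d) (Fin d) ℚ_[p]) i j = (q : ℚ_[p]) * c} :=
  stmt16_general p d hd q hq
end
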